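/- arXiv:1811.00168 — 5 statements merged into one kernel-verified Lean document; each statement's English description precedes it below -/
import Mathlib

section
/- Let f(x) = (1/2)(x^T P x + 2 q^T x + r) + I_{F,g}(x) be an extended quadratic function on R^n, where I_{F,g}(x) = 0 if Fx + g = 0 and +∞ otherwise, and suppose the constraint set {x : Fx + g = 0} is nonempty with free parameter representation {x_0 + V_2 z : z ∈ R^l} where the columns of V_2 form a basis of the nullspace of F. Then f is convex if and only if V_2^T P V_2 is positive semidefinite. -/
open Matrix

/-- The quadratic part of an extended quadratic function:
`(1/2)(xᵀ P x + 2 qᵀ x + r)`. -/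
noncomputable def quadPart {n : ℕ} (P : Matrix (Fin n) (Fin n) ℝ) (q : Fin n → ℝ) (r : ℝ)
    (x : Fin n → ℝ) : ℝ :=
  (1 / 2) * (x ⬝ᵥ P.mulVec x + 2 * (q ⬝ᵥ x) + r)

/-- An extended quadratic function: quadratic part plus the `0/+∞` indicator of
`{x | Fx + g = 0}`, valued in the extended reals. -/
noncomputable def extQuad {n : ℕ} {ι : Type} [Fintype ι]
    (P : Matrix (Fin n) (Fin n) ℝ) (q : Fin n → ℝ) (r : ℝ)
    (F : Matrix ι (Fin n) ℝ) (g : ι → ℝ) (x : Fin n → ℝ) : EReal :=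
  if F.mulVec x + g = 0 then ((quadPart P q r x : ℝ) : EReal) else ⊤

/-- Convexity of an extended-real-valued function. -/
def ERealConvexOn {E : Type} [AddCommMonoid E] [Module ℝ E] (f : E → EReal) : Prop :=
  ∀ x y : E, ∀ a b : ℝ, 0 ≤ a → 0 ≤ b → a + b = 1 →
    f (a • x + b • y) ≤ (a : EReal) * f x + (b : EReal) * f y

/-
Where `extQuad` is finite it is the quadratic `quadPart` on the affine set `{x | F x + g = 0}`,
so its convexity is the convexity of `quadPart` on that set. The Jensen gap of `quadPart` at
weights `a, b` is `(a b / 2) (x - y)ᵀ P (x - y)`, and the differences of points of the affine set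
are exactly the nullspace of `F`, i.e. the vectors `V₂ z`; so convexity amounts to
`zᵀ V₂ᵀ P V₂ z ≥ 0` for all `z`.
-/

section ERealConvexOn

variable {E : Type} [AddCommMonoid E] [Module ℝ E] {f : E → EReal} {s : Set E} {φ : E → ℝ}

theorem convexOn_of_erealConvexOn (hf_mem : ∀ x ∈ s, f x = φ x)
    (hf_not_mem : ∀ x ∉ s, f x = ⊤) (hf : ERealConvexOn f) : ConvexOn ℝ s φ := by
  have hreal : ∀ x ∈ s, ∀ y ∈ s, ∀ a b : ℝ, 0 ≤ a → 0 ≤ b → a + b = 1 →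
      f (a • x + b • y) ≤ ((a * φ x + b * φ y : ℝ) : EReal) := by
    intro x hx y hy a b ha hb hab
    simpa [hf_mem x hx, hf_mem y hy] using hf x y a b ha hb hab
  have hs : Convex ℝ s := by
    intro x hx y hy a b ha hb hab
    by_contra hxy
    have := hreal x hx y hy a b ha hb hab
    rw [hf_not_mem _ hxy, top_le_iff] at this
    exact EReal.coe_ne_top _ this
  refine ⟨hs, fun x hx y hy a b ha hb hab => ?_⟩
  have := hreal x hx y hy a b ha hb hab
  rwa [hf_mem _ (hs hx hy ha hb hab), EReal.coe_le_coe_iff] at this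

theorem erealConvexOn_of_convexOn (hf_mem : ∀ x ∈ s, f x = φ x)
    (hf_not_mem : ∀ x ∉ s, f x = ⊤) (hφ : ConvexOn ℝ s φ) : ERealConvexOn f := by
  intro x y a b ha hb hab
  obtain rfl | ha := ha.eq_or_lt
  · obtain rfl : b = 1 := by linarith
    simp
  obtain rfl | hb := hb.eq_or_lt
  · obtain rfl : a = 1 := by linarith
    simp
  by_cases hxy : x ∈ s ∧ y ∈ s
  · rw [hf_mem _ (hφ.1 hxy.1 hxy.2 ha.le hb.le hab), hf_mem x hxy.1, hf_mem y hxy.2]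
    exact_mod_cast hφ.2 hxy.1 hxy.2 ha.le hb.le hab
  have hf_ne_bot : ∀ z, f z ≠ ⊥ := fun z => by
    by_cases hz : z ∈ s
    · simp [hf_mem z hz]
    · simp [hf_not_mem z hz]
  have hmul_ne_bot : ∀ (c : ℝ) z, 0 < c → (c : EReal) * f z ≠ ⊥ := fun c z hc =>
    (EReal.mul_ne_bot _ _).2 ⟨.inl (EReal.coe_ne_bot c), .inr (hf_ne_bot z),
      .inl (EReal.coe_ne_top c), .inl (EReal.coe_nonneg.2 hc.le)⟩
  rcases not_and_or.1 hxy with hx | hy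
  · rw [hf_not_mem x hx, EReal.coe_mul_top_of_pos ha,
      EReal.top_add_of_ne_bot (hmul_ne_bot b y hb)]
    exact le_top
  · rw [hf_not_mem y hy, EReal.coe_mul_top_of_pos hb,
      EReal.add_top_of_ne_bot (hmul_ne_bot a x ha)]
    exact le_top

theorem erealConvexOn_iff_convexOn (hf_mem : ∀ x ∈ s, f x = φ x)
    (hf_not_mem : ∀ x ∉ s, f x = ⊤) : ERealConvexOn f ↔ ConvexOn ℝ s φ :=
  ⟨convexOn_of_erealConvexOn hf_mem hf_not_mem, erealConvexOn_of_convexOn hf_mem hf_not_mem⟩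

end ERealConvexOn

section QuadPart

variable {n : ℕ} {ι : Type}

theorem quadPart_jensen_gap (P : Matrix (Fin n) (Fin n) ℝ) (q : Fin n → ℝ) (r : ℝ)
    (x y : Fin n → ℝ) {a b : ℝ} (hab : a + b = 1) :
    a * quadPart P q r x + b * quadPart P q r y - quadPart P q r (a • x + b • y)
      = a * b / 2 * ((x - y) ⬝ᵥ P *ᵥ (x - y)) := by
  obtain rfl : b = 1 - a := by linarith
  simp only [quadPart, mulVec_add, mulVec_smul, mulVec_sub, dotProduct_add, add_dotProduct,
    smul_dotProduct, dotProduct_smul, sub_dotProduct, dotProduct_sub, smul_eq_mul]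
  ring

theorem convexOn_quadPart_iff (P : Matrix (Fin n) (Fin n) ℝ) (q : Fin n → ℝ) (r : ℝ)
    {s : Set (Fin n → ℝ)} (hs : Convex ℝ s) :
    ConvexOn ℝ s (quadPart P q r) ↔ ∀ x ∈ s, ∀ y ∈ s, 0 ≤ (x - y) ⬝ᵥ P *ᵥ (x - y) := by
  constructor
  · intro hφ x hx y hy
    have hgap := quadPart_jensen_gap P q r x y (a := 1 / 2) (b := 1 / 2) (by norm_num)
    have := hφ.2 hx hy (by norm_num : (0 : ℝ) ≤ 1 / 2) (by norm_num : (0 : ℝ) ≤ 1 / 2)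
      (by norm_num)
    simp only [smul_eq_mul] at this
    nlinarith
  · refine fun hP => ⟨hs, fun x hx y hy a b ha hb hab => ?_⟩
    have hgap := quadPart_jensen_gap P q r x y hab
    simp only [smul_eq_mul]
    nlinarith [mul_nonneg (mul_nonneg ha hb) (hP x hx y hy)]

theorem convex_setOf_mulVec_add_eq_zero (F : Matrix ι (Fin n) ℝ) (g : ι → ℝ) :
    Convex ℝ {x | F *ᵥ x + g = 0} := by
  intro x hx y hy a b _ _ hab
  have : F *ᵥ (a • x + b • y) + g = a • (F *ᵥ x + g) + b • (F *ᵥ y + g) := by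
    rw [mulVec_add, mulVec_smul, mulVec_smul, smul_add, smul_add, add_add_add_comm,
      ← add_smul, hab, one_smul]
  simp_all

theorem forall_sub_of_mulVec_add_eq_zero_iff (F : Matrix ι (Fin n) ℝ) (g : ι → ℝ)
    {x₀ : Fin n → ℝ} (hx₀ : F *ᵥ x₀ + g = 0) (Q : (Fin n → ℝ) → Prop) :
    (∀ x ∈ {x | F *ᵥ x + g = 0}, ∀ y ∈ {x | F *ᵥ x + g = 0}, Q (x - y)) ↔
      ∀ v, F *ᵥ v = 0 → Q v := by
  constructor
  · intro h v hv
    simpa using h (v + x₀) (by rw [Set.mem_ofPred, mulVec_add, hv, zero_add, hx₀]) x₀ hx₀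
  · intro h x hx y hy
    exact h _ (by rw [mulVec_sub, sub_eq_zero, ← add_right_cancel_iff, hx, hy])

theorem posSemidef_transpose_mul_mul_iff {m : ℕ} {P : Matrix (Fin n) (Fin n) ℝ} (hP : P.IsSymm)
    (V : Matrix (Fin n) (Fin m) ℝ) :
    (Vᵀ * P * V).PosSemidef ↔ ∀ z, 0 ≤ V *ᵥ z ⬝ᵥ P *ᵥ (V *ᵥ z) := by
  have hsymm : (Vᵀ * P * V).IsHermitian := by
    rw [isHermitian_iff_isSymm, IsSymm, transpose_mul, transpose_mul, transpose_transpose, hP,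
      Matrix.mul_assoc]
  simp only [posSemidef_iff_dotProduct_mulVec, hsymm, true_and, star_trivial,
    ← mulVec_mulVec, dotProduct_mulVec _ Vᵀ, vecMul_transpose]

end QuadPart

theorem extQuad_convex_iff_general {n l p : ℕ}
    (P : Matrix (Fin n) (Fin n) ℝ) (hP : P.IsSymm) (q : Fin n → ℝ) (r : ℝ)
    (F : Matrix (Fin p) (Fin n) ℝ) (g : Fin p → ℝ)
    (x₀ : Fin n → ℝ) (hx₀ : F.mulVec x₀ + g = 0)
    (V₂ : Matrix (Fin n) (Fin l) ℝ)
    (hV₂ : ∀ x, F.mulVec x = 0 ↔ ∃ z, x = V₂.mulVec z) :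
    ERealConvexOn (extQuad P q r F g) ↔ (V₂.transpose * P * V₂).PosSemidef := by
  rw [erealConvexOn_iff_convexOn (f := extQuad P q r F g) (s := {x | F *ᵥ x + g = 0})
      (φ := quadPart P q r) (fun x hx => if_pos hx) (fun x hx => if_neg hx),
    convexOn_quadPart_iff P q r (convex_setOf_mulVec_add_eq_zero F g),
    forall_sub_of_mulVec_add_eq_zero_iff F g hx₀ (fun v => 0 ≤ v ⬝ᵥ P *ᵥ v),
    posSemidef_transpose_mul_mul_iff hP]
  constructor
  · exact fun h z => h _ ((hV₂ _).2 ⟨z, rfl⟩)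
  · intro h v hv
    obtain ⟨z, rfl⟩ := (hV₂ v).1 hv
    exact h z

/-- an extended quadratic with nonempty constraint set, with free parameter
representation `x = x₀ + V₂ z` (columns of `V₂` a basis of the nullspace of `F`),
is convex iff `V₂ᵀ P V₂` is positive semidefinite. -/
theorem extQuad_convex_iff {n l p : ℕ}
    (P : Matrix (Fin n) (Fin n) ℝ) (hP : P.IsSymm) (q : Fin n → ℝ) (r : ℝ)
    (F : Matrix (Fin p) (Fin n) ℝ) (g : Fin p → ℝ)
    (x₀ : Fin n → ℝ) (hx₀ : F.mulVec x₀ + g = 0)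
    (V₂ : Matrix (Fin n) (Fin l) ℝ)
    (hV₂ : ∀ x, F.mulVec x = 0 ↔ ∃ z, x = V₂.mulVec z)
    (hV₂inj : ∀ z, V₂.mulVec z = 0 → z = 0) :
    ERealConvexOn (extQuad P q r F g) ↔ (V₂.transpose * P * V₂).PosSemidef :=
  extQuad_convex_iff_general P hP q r F g x₀ hx₀ V₂ hV₂
end

section
/- Let f be an extended quadratic function with constraint set {x : Fx+g = 0} nonempty, with free parameter representation x_0, V_2 (columns of V_2 spanning the nullspace of F). Then f(x) ≥ 0 for all x ∈ R^n if and only if the matrix [V_2, x_0; 0, 1]^T [[P, q],[q^T, r]] [V_2, x_0; 0, 1] is positive semidefinite. -/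
open Matrix

/-!
Homogenize: with `φ(y, t) = yᵀPy + 2t qᵀy + rt²` and `A = [V₂, x₀; 0, 1]`, the quadratic form of
`Aᵀ [[P, q], [qᵀ, r]] A` at `(z, t)` is `φ(V₂z + tx₀, t)`. Since `φ(tx, t) = t² φ(x, 1)` and
`φ(x, 1) = 2 f(x)`, nonnegativity of `f` on the affine set `{x₀ + V₂z}` gives nonnegativity of the
form wherever `t ≠ 0`, and continuity in `t` extends it to `t = 0`. Conversely, `t = 1`
recovers `f`.
-/

lemma nonneg_of_continuous_of_forall_ne_zero {g : ℝ → ℝ} (hg : Continuous g)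
    (h : ∀ t ≠ 0, 0 ≤ g t) (t : ℝ) : 0 ≤ g t :=
  (isClosed_le continuous_const hg).closure_subset_iff.2 h (dense_compl_singleton (0 : ℝ) t)

lemma posSemidef_transpose_mul_mul_iff_s2 {m k : Type*} [Fintype m] [Fintype k] {M : Matrix m m ℝ}
    (hM : M.IsSymm) (A : Matrix m k ℝ) :
    (Aᵀ * M * A).PosSemidef ↔ ∀ v, 0 ≤ (A *ᵥ v) ⬝ᵥ M *ᵥ (A *ᵥ v) := by
  have hMh : M.IsHermitian := by rw [IsHermitian, conjTranspose_eq_transpose_of_trivial]; exact hM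
  have hAMA : (Aᵀ * M * A).IsHermitian := by
    simpa only [conjTranspose_eq_transpose_of_trivial] using isHermitian_conjTranspose_mul_mul A hMh
  simp only [posSemidef_iff_dotProduct_mulVec, hAMA, true_and, star_trivial, ← mulVec_mulVec,
    dotProduct_mulVec _ Aᵀ, vecMul_transpose]

lemma mulVec_add_eq_zero_iff_exists {ι m k : Type*} [Fintype m] [Fintype k]
    {F : Matrix ι m ℝ} {g : ι → ℝ} {x₀ : m → ℝ} (hx₀ : F *ᵥ x₀ + g = 0) {V : Matrix m k ℝ}
    (hV : ∀ x, F *ᵥ x = 0 ↔ ∃ z, x = V *ᵥ z) (x : m → ℝ) :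
    F *ᵥ x + g = 0 ↔ ∃ z, x = x₀ + V *ᵥ z := by
  have hsub : F *ᵥ x + g = F *ᵥ (x - x₀) + (F *ᵥ x₀ + g) := by rw [mulVec_sub]; abel
  rw [hsub, hx₀, add_zero, hV]
  simp only [sub_eq_iff_eq_add']

lemma extQuad_nonneg_iff_forall_quadPart_nonneg {n : ℕ} {ι : Type} {k : Type*} [Fintype ι]
    [Fintype k] (P : Matrix (Fin n) (Fin n) ℝ) (q : Fin n → ℝ) (r : ℝ)
    {F : Matrix ι (Fin n) ℝ} {g : ι → ℝ} {x₀ : Fin n → ℝ} (hx₀ : F *ᵥ x₀ + g = 0)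
    {V : Matrix (Fin n) k ℝ} (hV : ∀ x, F *ᵥ x = 0 ↔ ∃ z, x = V *ᵥ z) :
    (∀ x, (0 : EReal) ≤ extQuad P q r F g x) ↔ ∀ z, 0 ≤ quadPart P q r (x₀ + V *ᵥ z) := by
  refine ⟨fun h z => ?_, fun h x => ?_⟩
  · have hfeas : F *ᵥ (x₀ + V *ᵥ z) + g = 0 :=
      (mulVec_add_eq_zero_iff_exists hx₀ hV _).2 ⟨z, rfl⟩
    simpa [extQuad, hfeas] using h (x₀ + V *ᵥ z)
  · unfold extQuad
    split_ifs with hfeas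
    · obtain ⟨z, rfl⟩ := (mulVec_add_eq_zero_iff_exists hx₀ hV x).1 hfeas
      exact EReal.coe_nonneg.2 (h z)
    · exact le_top

def paramMatrix {m k : Type*} (V : Matrix m k ℝ) (x₀ : m → ℝ) : Matrix (m ⊕ Unit) (k ⊕ Unit) ℝ :=
  fromBlocks V (of fun i (_ : Unit) => x₀ i) 0 1

lemma paramMatrix_mulVec {m k : Type*} [Fintype k] (V : Matrix m k ℝ) (x₀ : m → ℝ)
    (v : k ⊕ Unit → ℝ) :
    paramMatrix V x₀ *ᵥ v = Sum.elim (V *ᵥ (v ∘ Sum.inl) + v (Sum.inr ()) • x₀)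
      (fun _ => v (Sum.inr ())) := by
  ext (i | i) <;> simp [paramMatrix, mulVec, dotProduct, mul_comm]

section Homogenization

variable {m : Type*} (P : Matrix m m ℝ) (q : m → ℝ) (r : ℝ)

def quadMatrix : Matrix (m ⊕ Unit) (m ⊕ Unit) ℝ :=
  fromBlocks P (of fun i (_ : Unit) => q i) (of fun (_ : Unit) j => q j) (of fun _ _ => r)

lemma quadMatrix_isSymm {P : Matrix m m ℝ} (hP : P.IsSymm) : (quadMatrix P q r).IsSymm :=
  hP.fromBlocks (by ext; rfl) (by ext; rfl)

variable [Fintype m]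

def quadHom (y : m → ℝ) (t : ℝ) : ℝ :=
  y ⬝ᵥ P *ᵥ y + 2 * t * (q ⬝ᵥ y) + r * t ^ 2

lemma quadHom_smul (x : m → ℝ) (t : ℝ) : quadHom P q r (t • x) t = t ^ 2 * quadHom P q r x 1 := by
  simp only [quadHom, mulVec_smul, dotProduct_smul, smul_dotProduct, smul_eq_mul]
  ring

lemma continuous_quadHom_line (w x₀ : m → ℝ) :
    Continuous fun t => quadHom P q r (w + t • x₀) t := by
  unfold quadHom
  fun_prop

lemma sumElim_dotProduct_quadMatrix_mulVec (y : m → ℝ) (t : ℝ) :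
    Sum.elim y (fun _ => t) ⬝ᵥ quadMatrix P q r *ᵥ Sum.elim y (fun _ => t) = quadHom P q r y t := by
  have hB : (of fun i (_ : Unit) => q i) *ᵥ (fun _ => t) = t • q := by
    ext; simp [mulVec, dotProduct, mul_comm]
  have hC : (of fun (_ : Unit) j => q j) *ᵥ y = fun _ => q ⬝ᵥ y := rfl
  have hD : (of fun (_ : Unit) (_ : Unit) => r) *ᵥ (fun _ => t) = fun _ => r * t := by
    ext; simp [mulVec, dotProduct]
  simp only [quadMatrix, quadHom, fromBlocks_mulVec, Sum.elim_comp_inl, Sum.elim_comp_inr, hB, hC,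
    hD, sumElim_dotProduct_sumElim, dotProduct_add, dotProduct_smul, dotProduct_comm y q]
  simp [dotProduct]
  ring

end Homogenization

lemma quadHom_one {n : ℕ} (P : Matrix (Fin n) (Fin n) ℝ) (q : Fin n → ℝ) (r : ℝ) (x : Fin n → ℝ) :
    quadHom P q r x 1 = 2 * quadPart P q r x := by
  simp only [quadHom, quadPart]
  ring

lemma quadHom_nonneg_of_forall_quadPart_nonneg {n : ℕ} {k : Type*} [Fintype k]
    (P : Matrix (Fin n) (Fin n) ℝ) (q : Fin n → ℝ) (r : ℝ) {x₀ : Fin n → ℝ}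
    {V : Matrix (Fin n) k ℝ} (h : ∀ z, 0 ≤ quadPart P q r (x₀ + V *ᵥ z)) (z : k → ℝ) (t : ℝ) :
    0 ≤ quadHom P q r (V *ᵥ z + t • x₀) t := by
  refine nonneg_of_continuous_of_forall_ne_zero (continuous_quadHom_line P q r _ x₀)
    (fun t ht => ?_) t
  have hscale : V *ᵥ z + t • x₀ = t • (x₀ + V *ᵥ (t⁻¹ • z)) := by
    rw [mulVec_smul, smul_add, smul_smul, mul_inv_cancel₀ ht, one_smul, add_comm]
  rw [hscale, quadHom_smul, quadHom_one]
  have := h (t⁻¹ • z)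
  positivity

theorem extQuad_nonneg_iff_general {n l p : ℕ}
    (P : Matrix (Fin n) (Fin n) ℝ) (hP : P.IsSymm) (q : Fin n → ℝ) (r : ℝ)
    (F : Matrix (Fin p) (Fin n) ℝ) (g : Fin p → ℝ)
    (x₀ : Fin n → ℝ) (hx₀ : F.mulVec x₀ + g = 0)
    (V₂ : Matrix (Fin n) (Fin l) ℝ)
    (hV₂ : ∀ x, F.mulVec x = 0 ↔ ∃ z, x = V₂.mulVec z) :
    (∀ x, (0 : EReal) ≤ extQuad P q r F g x) ↔
      ((Matrix.fromBlocks V₂ (Matrix.of fun i (_ : Unit) => x₀ i) (0 : Matrix Unit (Fin l) ℝ) (1 : Matrix Unit Unit ℝ)).transpose *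
        (Matrix.fromBlocks P (Matrix.of fun i (_ : Unit) => q i)
          (Matrix.of fun (_ : Unit) j => q j) (Matrix.of fun (_ : Unit) (_ : Unit) => r)) *
        (Matrix.fromBlocks V₂ (Matrix.of fun i (_ : Unit) => x₀ i) (0 : Matrix Unit (Fin l) ℝ) (1 : Matrix Unit Unit ℝ))).PosSemidef := by
  change _ ↔ ((paramMatrix V₂ x₀)ᵀ * quadMatrix P q r * paramMatrix V₂ x₀).PosSemidef
  rw [extQuad_nonneg_iff_forall_quadPart_nonneg P q r hx₀ hV₂,
    posSemidef_transpose_mul_mul_iff_s2 (quadMatrix_isSymm q r hP)]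
  simp only [paramMatrix_mulVec, sumElim_dotProduct_quadMatrix_mulVec]
  refine ⟨fun h v => quadHom_nonneg_of_forall_quadPart_nonneg P q r h _ _, fun h z => ?_⟩
  have hz := h (Sum.elim z fun _ => 1)
  rw [Sum.elim_comp_inl, Sum.elim_inr, one_smul, add_comm, quadHom_one] at hz
  linarith

/-- an extended quadratic with nonempty constraint set and free parameter
representation `x = x₀ + V₂ z` is nonnegative everywhere iff the matrix
`[V₂, x₀; 0, 1]ᵀ [[P, q], [qᵀ, r]] [V₂, x₀; 0, 1]` is positive semidefinite. -/
theorem extQuad_nonneg_iff {n l p : ℕ}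
    (P : Matrix (Fin n) (Fin n) ℝ) (hP : P.IsSymm) (q : Fin n → ℝ) (r : ℝ)
    (F : Matrix (Fin p) (Fin n) ℝ) (g : Fin p → ℝ)
    (x₀ : Fin n → ℝ) (hx₀ : F.mulVec x₀ + g = 0)
    (V₂ : Matrix (Fin n) (Fin l) ℝ)
    (hV₂ : ∀ x, F.mulVec x = 0 ↔ ∃ z, x = V₂.mulVec z)
    (hV₂inj : ∀ z, V₂.mulVec z = 0 → z = 0) :
    (∀ x, (0 : EReal) ≤ extQuad P q r F g x) ↔
      ((Matrix.fromBlocks V₂ (Matrix.of fun i (_ : Unit) => x₀ i) (0 : Matrix Unit (Fin l) ℝ) (1 : Matrix Unit Unit ℝ)).transpose *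
        (Matrix.fromBlocks P (Matrix.of fun i (_ : Unit) => q i)
          (Matrix.of fun (_ : Unit) j => q j) (Matrix.of fun (_ : Unit) (_ : Unit) => r)) *
        (Matrix.fromBlocks V₂ (Matrix.of fun i (_ : Unit) => x₀ i) (0 : Matrix Unit (Fin l) ℝ) (1 : Matrix Unit Unit ℝ))).PosSemidef :=
  extQuad_nonneg_iff_general P hP q r F g x₀ hx₀ V₂ hV₂
end

section
/- Let f(x) = (1/2)[x;1]^T [[P,q],[q^T,r]] [x;1] + I_{F,g}(x) and f̃(x) = (1/2)[x;1]^T [[P̃,q̃],[q̃^T,r̃]] [x;1] + I_{F̃,g̃}(x) be extended quadratics with the same (nonempty) constraint set, with common free parameter representation x = x_0 + V_2 z (columns of V_2 a basis of the common nullspace). Then f = f̃ if and only if V_2^T P V_2 = V_2^T P̃ V_2, V_2^T(P x_0 + q) = V_2^T(P̃ x_0 + q̃), and x_0^T P x_0 + 2 q^T x_0 + r = x_0^T P̃ x_0 + 2 q̃^T x_0 + r̃. -/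
open Matrix

lemma mulVec_dot {n l : ℕ} (V : Matrix (Fin n) (Fin l) ℝ) (z : Fin l → ℝ) (w : Fin n → ℝ) :
    V.mulVec z ⬝ᵥ w = z ⬝ᵥ V.transpose.mulVec w := by
  rw [dotProduct_comm, dotProduct_mulVec, ← mulVec_transpose, dotProduct_comm]

lemma quadPart_expand {n l : ℕ} (P : Matrix (Fin n) (Fin n) ℝ) (hP : P.IsSymm)
    (q : Fin n → ℝ) (r : ℝ) (x₀ : Fin n → ℝ) (V : Matrix (Fin n) (Fin l) ℝ) (z : Fin l → ℝ) :
    quadPart P q r (x₀ + V.mulVec z) =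
      quadPart (V.transpose * P * V) (V.transpose.mulVec (P.mulVec x₀ + q))
        (x₀ ⬝ᵥ P.mulVec x₀ + 2 * (q ⬝ᵥ x₀) + r) z := by
  have h1 : x₀ ⬝ᵥ P.mulVec (V.mulVec z) = z ⬝ᵥ V.transpose.mulVec (P.mulVec x₀) := by
    rw [dotProduct_mulVec, ← mulVec_transpose, hP.eq, dotProduct_comm, mulVec_dot]
  have h2 : V.mulVec z ⬝ᵥ P.mulVec x₀ = z ⬝ᵥ V.transpose.mulVec (P.mulVec x₀) := mulVec_dot ..
  have h3 : V.mulVec z ⬝ᵥ P.mulVec (V.mulVec z) = z ⬝ᵥ (V.transpose * P * V).mulVec z := by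
    rw [mulVec_dot, mulVec_mulVec, mulVec_mulVec]
  have h4 : q ⬝ᵥ (V.mulVec z) = z ⬝ᵥ V.transpose.mulVec q := by
    rw [dotProduct_comm, mulVec_dot]
  have h5 : V.transpose.mulVec (P.mulVec x₀) ⬝ᵥ z = z ⬝ᵥ V.transpose.mulVec (P.mulVec x₀) :=
    dotProduct_comm ..
  have h6 : V.transpose.mulVec q ⬝ᵥ z = z ⬝ᵥ V.transpose.mulVec q := dotProduct_comm ..
  simp only [quadPart, mulVec_add, dotProduct_add, add_dotProduct, h1, h2, h3, h4, h5, h6]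
  ring

lemma quadPart_eq_iff' {l : ℕ} (A A' : Matrix (Fin l) (Fin l) ℝ)
    (hA : A.IsSymm) (hA' : A'.IsSymm) (b b' : Fin l → ℝ) (c c' : ℝ)
    (h : ∀ z, quadPart A b c z = quadPart A' b' c' z) :
    A = A' ∧ b = b' ∧ c = c' := by
  have H : ∀ z, z ⬝ᵥ A.mulVec z + 2 * (b ⬝ᵥ z) + c = z ⬝ᵥ A'.mulVec z + 2 * (b' ⬝ᵥ z) + c' := by
    intro z
    have := h z
    unfold quadPart at this
    linarith
  have hc : c = c' := by
    have := H 0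
    simpa using this
  have Hq : ∀ z, z ⬝ᵥ A.mulVec z = z ⬝ᵥ A'.mulVec z ∧ b ⬝ᵥ z = b' ⬝ᵥ z := by
    intro z
    have h1 := H z
    have h2 := H (-z)
    simp only [mulVec_neg, dotProduct_neg, neg_dotProduct, neg_neg] at h2
    constructor <;> linarith
  have hb : b = b' := by
    funext i
    have := (Hq (Pi.single i 1)).2
    simpa using this
  have Hb : ∀ z w, z ⬝ᵥ A.mulVec w = z ⬝ᵥ A'.mulVec w := by
    intro z w
    have h1 := (Hq (z + w)).1
    have hz := (Hq z).1
    have hw := (Hq w).1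
    simp only [mulVec_add, dotProduct_add, add_dotProduct] at h1
    have hs : w ⬝ᵥ A.mulVec z = z ⬝ᵥ A.mulVec w := by
      rw [dotProduct_mulVec, ← mulVec_transpose, hA.eq, dotProduct_comm]
    have hs' : w ⬝ᵥ A'.mulVec z = z ⬝ᵥ A'.mulVec w := by
      rw [dotProduct_mulVec, ← mulVec_transpose, hA'.eq, dotProduct_comm]
    linarith
  have hA2 : A = A' := by
    ext i j
    have := Hb (Pi.single i 1) (Pi.single j 1)
    simpa [mulVec_single] using this
  exact ⟨hA2, hb, hc⟩

/-- two extended quadratics with the same nonempty constraint set, with common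
free parameter representation `x = x₀ + V₂ z`, are equal iff
`V₂ᵀ P V₂ = V₂ᵀ P̃ V₂`, `V₂ᵀ(P x₀ + q) = V₂ᵀ(P̃ x₀ + q̃)`, and
`x₀ᵀ P x₀ + 2 qᵀ x₀ + r = x₀ᵀ P̃ x₀ + 2 q̃ᵀ x₀ + r̃`. -/
theorem extQuad_eq_iff {n l p p' : ℕ}
    (P P' : Matrix (Fin n) (Fin n) ℝ) (hP : P.IsSymm) (hP' : P'.IsSymm)
    (q q' : Fin n → ℝ) (r r' : ℝ)
    (F : Matrix (Fin p) (Fin n) ℝ) (g : Fin p → ℝ)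
    (F' : Matrix (Fin p') (Fin n) ℝ) (g' : Fin p' → ℝ)
    (hsets : {x | F.mulVec x + g = 0} = {x | F'.mulVec x + g' = 0})
    (x₀ : Fin n → ℝ) (hx₀ : F.mulVec x₀ + g = 0)
    (V₂ : Matrix (Fin n) (Fin l) ℝ)
    (hV₂ : ∀ x, F.mulVec x = 0 ↔ ∃ z, x = V₂.mulVec z)
    (hV₂inj : ∀ z, V₂.mulVec z = 0 → z = 0) :
    extQuad P q r F g = extQuad P' q' r' F' g' ↔
      (V₂.transpose * P * V₂ = V₂.transpose * P' * V₂ ∧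
        V₂.transpose.mulVec (P.mulVec x₀ + q) = V₂.transpose.mulVec (P'.mulVec x₀ + q') ∧
        x₀ ⬝ᵥ P.mulVec x₀ + 2 * (q ⬝ᵥ x₀) + r =
          x₀ ⬝ᵥ P'.mulVec x₀ + 2 * (q' ⬝ᵥ x₀) + r') := by
  have hmem : ∀ x, (F.mulVec x + g = 0) ↔ ∃ z, x = x₀ + V₂.mulVec z := by
    intro x
    constructor
    · intro hx
      have hsub : F.mulVec (x - x₀) = 0 := by
        rw [mulVec_sub]
        have e1 : F.mulVec x = -g := eq_neg_of_add_eq_zero_left hx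
        have e2 : F.mulVec x₀ = -g := eq_neg_of_add_eq_zero_left hx₀
        rw [e1, e2, sub_self]
      obtain ⟨z, hz⟩ := (hV₂ _).1 hsub
      exact ⟨z, by rw [← hz]; abel⟩
    · rintro ⟨z, rfl⟩
      have hz : F.mulVec (V₂.mulVec z) = 0 := (hV₂ _).2 ⟨z, rfl⟩
      rw [mulVec_add, hz, add_zero, hx₀]
  have hsymA : (V₂.transpose * P * V₂).IsSymm := by
    rw [Matrix.IsSymm, transpose_mul, transpose_mul, transpose_transpose, hP.eq,
      Matrix.mul_assoc]
  have hsymA' : (V₂.transpose * P' * V₂).IsSymm := by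
    rw [Matrix.IsSymm, transpose_mul, transpose_mul, transpose_transpose, hP'.eq,
      Matrix.mul_assoc]
  constructor
  · intro h
    refine quadPart_eq_iff' _ _ hsymA hsymA' _ _ _ _ ?_
    intro z
    have hx : F.mulVec (x₀ + V₂.mulVec z) + g = 0 := (hmem _).2 ⟨z, rfl⟩
    have hx' : F'.mulVec (x₀ + V₂.mulVec z) + g' = 0 :=
      (Set.ext_iff.1 hsets (x₀ + V₂.mulVec z)).1 hx
    have hpt := congrFun h (x₀ + V₂.mulVec z)
    simp only [extQuad, if_pos hx, if_pos hx'] at hpt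
    have hreal : quadPart P q r (x₀ + V₂.mulVec z) = quadPart P' q' r' (x₀ + V₂.mulVec z) := by
      exact_mod_cast hpt
    rw [quadPart_expand P hP q r x₀ V₂ z, quadPart_expand P' hP' q' r' x₀ V₂ z] at hreal
    exact hreal
  · rintro ⟨h1, h2, h3⟩
    funext x
    by_cases hx : F.mulVec x + g = 0
    · have hx' : F'.mulVec x + g' = 0 := (Set.ext_iff.1 hsets x).1 hx
      obtain ⟨z, rfl⟩ := (hmem x).1 hx
      simp only [extQuad, if_pos hx, if_pos hx']
      congr 1
      rw [quadPart_expand P hP q r x₀ V₂ z, quadPart_expand P' hP' q' r' x₀ V₂ z, h1, h2, h3]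
    · have hx' : ¬(F'.mulVec x + g' = 0) := fun h => hx ((Set.ext_iff.1 hsets x).2 h)
      simp [extQuad, hx, hx']
end

section
/- Partial minimization of a jointly convex extended quadratic with strict convexity in the minimized variable yields an extended quadratic: let f(x,u) = (1/2)[x;u;1]^T M [x;u;1] + I(F_x x + F_u u + g = 0) with block matrix M having blocks P_xx, P_xu, P_ux, P_uu, q_x, q_u, r. If P_uu restricted to the nullspace of F_u is positive definite (f strictly convex in u for each fixed feasible x), then g(x) = inf_u f(x,u) is an extended quadratic function of x, with embedded constraint (I − F_u F_u^†) F_x x + (I − F_u F_u^†) g = 0, and the infimum is attained, for every x in the domain, by an affine function u*(x) = A x + b. -/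
open Matrix

section Aux
variable {n m p : ℕ}

lemma dot_self_nonneg' (v : Fin m → ℝ) : 0 ≤ v ⬝ᵥ v :=
  Finset.sum_nonneg fun i _ => mul_self_nonneg _

lemma mulVec_dot_s10 {a b : ℕ} (M : Matrix (Fin a) (Fin b) ℝ) (v : Fin b → ℝ) (w : Fin a → ℝ) :
    (M *ᵥ v) ⬝ᵥ w = v ⬝ᵥ (Mᵀ *ᵥ w) := by
  rw [← Matrix.vecMul_transpose, ← Matrix.dotProduct_mulVec]

lemma dot_mulVec_symm (M : Matrix (Fin m) (Fin m) ℝ) (hM : Mᵀ = M)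
    (v w : Fin m → ℝ) : v ⬝ᵥ M *ᵥ w = (M *ᵥ v) ⬝ᵥ w := by
  rw [Matrix.dotProduct_mulVec, ← hM, Matrix.vecMul_transpose, hM]

lemma transpose_mulVec_dot {a b : ℕ} (M : Matrix (Fin a) (Fin b) ℝ)
    (v : Fin b → ℝ) (w : Fin a → ℝ) : v ⬝ᵥ (Mᵀ *ᵥ w) = (M *ᵥ v) ⬝ᵥ w := by
  rw [dotProduct_comm, mulVec_dot_s10, transpose_transpose, dotProduct_comm]

end Aux



/-- `Ad` is the Moore–Penrose pseudo-inverse of `A`. -/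
def IsMoorePenrose {m n : ℕ} (A : Matrix (Fin m) (Fin n) ℝ)
    (Ad : Matrix (Fin n) (Fin m) ℝ) : Prop :=
  A * Ad * A = A ∧ Ad * A * Ad = Ad ∧ (A * Ad).transpose = A * Ad ∧
    (Ad * A).transpose = Ad * A

/-- The quadratic part of a two-variable extended quadratic `f(x,u)`. -/
noncomputable def quadPart2 {n m : ℕ}
    (Pxx : Matrix (Fin n) (Fin n) ℝ) (Pxu : Matrix (Fin n) (Fin m) ℝ)
    (Puu : Matrix (Fin m) (Fin m) ℝ) (qx : Fin n → ℝ) (qu : Fin m → ℝ) (r : ℝ)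
    (x : Fin n → ℝ) (u : Fin m → ℝ) : ℝ :=
  (1 / 2) * (x ⬝ᵥ Pxx.mulVec x + 2 * (x ⬝ᵥ Pxu.mulVec u) + u ⬝ᵥ Puu.mulVec u +
    2 * (qx ⬝ᵥ x) + 2 * (qu ⬝ᵥ u) + r)

/-- A two-variable extended quadratic `f(x,u)` with constraint `Fₓx + Fᵤu + g = 0`. -/
noncomputable def extQuad2 {n m p : ℕ}
    (Pxx : Matrix (Fin n) (Fin n) ℝ) (Pxu : Matrix (Fin n) (Fin m) ℝ)
    (Puu : Matrix (Fin m) (Fin m) ℝ) (qx : Fin n → ℝ) (qu : Fin m → ℝ) (r : ℝ)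
    (Fx : Matrix (Fin p) (Fin n) ℝ) (Fu : Matrix (Fin p) (Fin m) ℝ) (g : Fin p → ℝ)
    (x : Fin n → ℝ) (u : Fin m → ℝ) : EReal :=
  if Fx.mulVec x + Fu.mulVec u + g = 0 then
    ((quadPart2 Pxx Pxu Puu qx qu r x u : ℝ) : EReal)
  else ⊤

/-- partial minimization over `u` of a jointly convex extended quadratic
`f(x,u)` that is strictly convex in `u` yields an extended quadratic in `x` with embedded
constraint `(I − Fᵤ Fᵤ†) Fₓ x + (I − Fᵤ Fᵤ†) g = 0`, and the infimum is attained, for every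
`x` in the domain, by an affine function `u*(x) = Ax + b`. -/
theorem partial_minimization_strictly_convex {n m p : ℕ}
    (Pxx : Matrix (Fin n) (Fin n) ℝ) (hPxx : Pxx.IsSymm)
    (Pxu : Matrix (Fin n) (Fin m) ℝ)
    (Puu : Matrix (Fin m) (Fin m) ℝ) (hPuu : Puu.IsSymm)
    (qx : Fin n → ℝ) (qu : Fin m → ℝ) (r : ℝ)
    (Fx : Matrix (Fin p) (Fin n) ℝ) (Fu : Matrix (Fin p) (Fin m) ℝ) (g : Fin p → ℝ)
    (Fud : Matrix (Fin m) (Fin p) ℝ) (hFud : IsMoorePenrose Fu Fud)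
    (hconv : ConvexOn ℝ {pr : (Fin n → ℝ) × (Fin m → ℝ) |
        Fx.mulVec pr.1 + Fu.mulVec pr.2 + g = 0}
      (fun pr => quadPart2 Pxx Pxu Puu qx qu r pr.1 pr.2))
    (hstrict : ∀ v : Fin m → ℝ, Fu.mulVec v = 0 → v ≠ 0 → 0 < v ⬝ᵥ Puu.mulVec v) :
    ∃ (Ph : Matrix (Fin n) (Fin n) ℝ) (qh : Fin n → ℝ) (rh : ℝ)
      (A : Matrix (Fin m) (Fin n) ℝ) (b : Fin m → ℝ),
      Ph.IsSymm ∧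
      (∀ x, (⨅ u, extQuad2 Pxx Pxu Puu qx qu r Fx Fu g x u) =
        extQuad Ph qh rh ((1 - Fu * Fud) * Fx) ((1 - Fu * Fud).mulVec g) x) ∧
      (∀ x, ((1 - Fu * Fud) * Fx).mulVec x + (1 - Fu * Fud).mulVec g = 0 →
        extQuad2 Pxx Pxu Puu qx qu r Fx Fu g x (A.mulVec x + b) =
          ⨅ u, extQuad2 Pxx Pxu Puu qx qu r Fx Fu g x u) := by
  classical
  obtain ⟨h1, h2, h3, h4⟩ := hFud
  have hPuu' : Puuᵀ = Puu := hPuu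

  set N : Matrix (Fin m) (Fin m) ℝ := 1 - Fud * Fu with hNdef
  have hNsymm : Nᵀ = N := by simp [hNdef, transpose_sub, h4]
  have hFuN : Fu * N = 0 := by
    simp [hNdef, Matrix.mul_sub, ← Matrix.mul_assoc, h1]
  have hNN : N * N = N := by
    have h5 : (Fud * Fu) * (Fud * Fu) = Fud * Fu := by rw [← Matrix.mul_assoc, h2]
    simp [hNdef, Matrix.mul_sub, Matrix.sub_mul, h5]
  have hFuNv : ∀ v : Fin m → ℝ, Fu *ᵥ (N *ᵥ v) = 0 := by
    intro v; rw [Matrix.mulVec_mulVec, hFuN, Matrix.zero_mulVec]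
  have hNv : ∀ v : Fin m → ℝ, Fu *ᵥ v = 0 → N *ᵥ v = v := by
    intro v hv
    simp [hNdef, Matrix.sub_mulVec, ← Matrix.mulVec_mulVec, hv]
  set S : Matrix (Fin m) (Fin m) ℝ := N * Puu * N + (1 - N) with hSdef
  -- positive definiteness of S
  have hSpos : ∀ v : Fin m → ℝ, v ≠ 0 → 0 < v ⬝ᵥ S *ᵥ v := by
    intro v hv
    have hexp : v ⬝ᵥ S *ᵥ v = (N *ᵥ v) ⬝ᵥ Puu *ᵥ (N *ᵥ v) + (v - N *ᵥ v) ⬝ᵥ (v - N *ᵥ v) := by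
      have e1 : v ⬝ᵥ (N * Puu * N) *ᵥ v = (N *ᵥ v) ⬝ᵥ Puu *ᵥ (N *ᵥ v) := by
        rw [← Matrix.mulVec_mulVec, ← Matrix.mulVec_mulVec, dot_mulVec_symm N hNsymm]
      have e2 : v ⬝ᵥ (1 - N) *ᵥ v = (v - N *ᵥ v) ⬝ᵥ (v - N *ᵥ v) := by
        have hNw : N *ᵥ (v - N *ᵥ v) = 0 := by
          rw [Matrix.mulVec_sub, Matrix.mulVec_mulVec, hNN, sub_self]
        have h0 : (N *ᵥ v) ⬝ᵥ (v - N *ᵥ v) = 0 := by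
          rw [← dot_mulVec_symm N hNsymm v (v - N *ᵥ v), hNw, dotProduct_zero]
        have hvv : v ⬝ᵥ (v - N *ᵥ v) = (v - N *ᵥ v) ⬝ᵥ (v - N *ᵥ v) := by
          calc v ⬝ᵥ (v - N *ᵥ v)
              = (v - N *ᵥ v) ⬝ᵥ (v - N *ᵥ v) + (N *ᵥ v) ⬝ᵥ (v - N *ᵥ v) := by
                rw [← add_dotProduct]; congr 1; abel
            _ = (v - N *ᵥ v) ⬝ᵥ (v - N *ᵥ v) := by rw [h0, add_zero]
        rw [Matrix.sub_mulVec, Matrix.one_mulVec, dotProduct_sub, ← hvv, dotProduct_sub]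
      rw [hSdef, Matrix.add_mulVec, dotProduct_add, e1, e2]
    rw [hexp]
    rcases eq_or_ne (N *ᵥ v) 0 with h | h
    · rw [h]
      simp only [zero_dotProduct, sub_zero, zero_add]
      exact lt_of_le_of_ne (dot_self_nonneg' v)
        (fun hc => hv ((dotProduct_self_eq_zero).mp hc.symm))
    · have := hstrict (N *ᵥ v) (hFuNv v) h
      have h2' : (0:ℝ) ≤ (v - N *ᵥ v) ⬝ᵥ (v - N *ᵥ v) := dot_self_nonneg' _
      linarith
  have hSdet : IsUnit S.det := by
    rw [isUnit_iff_ne_zero]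
    intro hdet
    obtain ⟨v, hv, hSv⟩ := (Matrix.exists_mulVec_eq_zero_iff).mpr hdet
    have := hSpos v hv
    rw [hSv, dotProduct_zero] at this
    exact lt_irrefl 0 this
  have hSS : S * S⁻¹ = 1 := Matrix.mul_nonsing_inv S hSdet
  -- key matrix identities
  set T : Matrix (Fin m) (Fin m) ℝ := N * S⁻¹ * N with hTdef
  have hN1N : N * (1 - N) = 0 := by rw [Matrix.mul_sub, mul_one, hNN, sub_self]
  have hNS : N * S = N * Puu * N := by
    rw [hSdef, Matrix.mul_add, hN1N, add_zero, ← Matrix.mul_assoc, ← Matrix.mul_assoc, hNN]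
  have hNPT : N * Puu * T = N := by
    calc N * Puu * T = (N * Puu * N) * S⁻¹ * N := by
          rw [hTdef]; noncomm_ring
      _ = N * (S * S⁻¹) * N := by rw [← hNS]; noncomm_ring
      _ = N := by rw [hSS, mul_one, hNN]
  have hFuT : Fu * T = 0 := by
    rw [hTdef, ← Matrix.mul_assoc, ← Matrix.mul_assoc, hFuN, Matrix.zero_mul,
      Matrix.zero_mul]
  -- the affine minimizer
  set E : Matrix (Fin m) (Fin m) ℝ := 1 - T * Puu with hEdef
  set A : Matrix (Fin m) (Fin n) ℝ := E * (-(Fud * Fx)) - T * Pxuᵀ with hAdef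
  set b : Fin m → ℝ := E *ᵥ (-(Fud *ᵥ g)) - T *ᵥ qu with hbdef
  -- closed form of the minimizer
  have hL1 : ∀ x : Fin n → ℝ,
      A *ᵥ x + b = -(Fud *ᵥ (Fx *ᵥ x + g)) -
        T *ᵥ (Puu *ᵥ (-(Fud *ᵥ (Fx *ᵥ x + g))) + (Pxuᵀ *ᵥ x + qu)) := by
    intro x
    rw [hAdef, hbdef, hEdef]
    simp only [Matrix.sub_mulVec, Matrix.add_mulVec, Matrix.one_mulVec,
      ← Matrix.mulVec_mulVec, Matrix.mulVec_add, Matrix.mulVec_sub,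
      Matrix.mulVec_neg, Matrix.neg_mulVec]
    abel
  -- stationarity
  have hL2 : ∀ x : Fin n → ℝ,
      N *ᵥ (Puu *ᵥ (A *ᵥ x + b) + (Pxuᵀ *ᵥ x + qu)) = 0 := by
    intro x
    rw [hL1 x]
    set y : Fin m → ℝ := Puu *ᵥ (-(Fud *ᵥ (Fx *ᵥ x + g))) + (Pxuᵀ *ᵥ x + qu) with hy
    have key : N *ᵥ (Puu *ᵥ (T *ᵥ y)) = N *ᵥ y := by
      rw [Matrix.mulVec_mulVec, Matrix.mulVec_mulVec, hNPT]
    have expand : Puu *ᵥ (-(Fud *ᵥ (Fx *ᵥ x + g)) - T *ᵥ y) + (Pxuᵀ *ᵥ x + qu)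
        = y - Puu *ᵥ (T *ᵥ y) := by
      rw [Matrix.mulVec_sub Puu, hy]; abel
    rw [expand, Matrix.mulVec_sub, key, sub_self]
  -- Fu applied to the minimizer
  have hFuAb : ∀ x : Fin n → ℝ,
      Fu *ᵥ (A *ᵥ x + b) = -((Fu * Fud) *ᵥ (Fx *ᵥ x + g)) := by
    intro x
    rw [hL1 x, Matrix.mulVec_sub, Matrix.mulVec_mulVec, hFuT, Matrix.zero_mulVec,
      sub_zero, Matrix.mulVec_neg, ← Matrix.mulVec_mulVec]
  -- difference identity for the quadratic part
  have hdiff : ∀ (x : Fin n → ℝ) (us d : Fin m → ℝ),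
      quadPart2 Pxx Pxu Puu qx qu r x (us + d) =
        quadPart2 Pxx Pxu Puu qx qu r x us + (1/2)*(d ⬝ᵥ Puu *ᵥ d) +
          d ⬝ᵥ (Puu *ᵥ us + (Pxuᵀ *ᵥ x + qu)) := by
    intro x us d
    have e1 : d ⬝ᵥ (Pxuᵀ *ᵥ x) = x ⬝ᵥ Pxu *ᵥ d := by
      rw [transpose_mulVec_dot, dotProduct_comm]
    have e2 : us ⬝ᵥ Puu *ᵥ d = d ⬝ᵥ Puu *ᵥ us := by
      rw [dot_mulVec_symm Puu hPuu', dotProduct_comm]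
    have e3 : qu ⬝ᵥ d = d ⬝ᵥ qu := dotProduct_comm _ _
    simp only [quadPart2, Matrix.mulVec_add, dotProduct_add, add_dotProduct]
    rw [e1, e2, e3]
    ring
  -- optimality of the affine minimizer on the feasible set
  have hopt : ∀ (x : Fin n → ℝ) (u : Fin m → ℝ),
      Fx *ᵥ x + Fu *ᵥ u + g = 0 → Fx *ᵥ x + Fu *ᵥ (A *ᵥ x + b) + g = 0 →
      quadPart2 Pxx Pxu Puu qx qu r x (A *ᵥ x + b) ≤
        quadPart2 Pxx Pxu Puu qx qu r x u := by
    intro x u hu hustar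
    set d : Fin m → ℝ := u - (A *ᵥ x + b) with hd
    have hud : u = (A *ᵥ x + b) + d := by rw [hd]; abel
    have hFud0 : Fu *ᵥ d = 0 := by
      rw [hd, Matrix.mulVec_sub]
      have : Fu *ᵥ u = Fu *ᵥ (A *ᵥ x + b) := by
        have : Fx *ᵥ x + Fu *ᵥ u + g = Fx *ᵥ x + Fu *ᵥ (A *ᵥ x + b) + g :=
          hu.trans hustar.symm
        have := congrArg (fun w => w - Fx *ᵥ x - g) this
        simpa using this
      rw [this, sub_self]
    have hd0 : d ⬝ᵥ (Puu *ᵥ (A *ᵥ x + b) + (Pxuᵀ *ᵥ x + qu)) = 0 := by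
      have hNd : N *ᵥ d = d := hNv d hFud0
      calc d ⬝ᵥ (Puu *ᵥ (A *ᵥ x + b) + (Pxuᵀ *ᵥ x + qu))
          = (N *ᵥ d) ⬝ᵥ (Puu *ᵥ (A *ᵥ x + b) + (Pxuᵀ *ᵥ x + qu)) := by rw [hNd]
        _ = d ⬝ᵥ (N *ᵥ (Puu *ᵥ (A *ᵥ x + b) + (Pxuᵀ *ᵥ x + qu))) := by
            rw [← dot_mulVec_symm N hNsymm]
        _ = 0 := by rw [hL2 x, dotProduct_zero]
    have hquad : 0 ≤ (1/2)*(d ⬝ᵥ Puu *ᵥ d) := by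
      rcases eq_or_ne d 0 with h | h
      · simp [h]
      · have := hstrict d hFud0 h
        linarith
    calc quadPart2 Pxx Pxu Puu qx qu r x (A *ᵥ x + b)
        ≤ quadPart2 Pxx Pxu Puu qx qu r x (A *ᵥ x + b) + (1/2)*(d ⬝ᵥ Puu *ᵥ d) +
            d ⬝ᵥ (Puu *ᵥ (A *ᵥ x + b) + (Pxuᵀ *ᵥ x + qu)) := by rw [hd0]; linarith
      _ = quadPart2 Pxx Pxu Puu qx qu r x ((A *ᵥ x + b) + d) := (hdiff x _ d).symm
      _ = quadPart2 Pxx Pxu Puu qx qu r x u := by rw [← hud]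
  -- the pushed-forward quadratic data
  have hquadeq : ∀ x : Fin n → ℝ,
      quadPart (Pxx + Pxu*A + Aᵀ*Pxuᵀ + Aᵀ*Puu*A)
        (Pxu *ᵥ b + Aᵀ *ᵥ (Puu *ᵥ b) + qx + Aᵀ *ᵥ qu)
        (b ⬝ᵥ Puu *ᵥ b + 2*(qu ⬝ᵥ b) + r) x =
      quadPart2 Pxx Pxu Puu qx qu r x (A *ᵥ x + b) := by
    intro x
    have t1 : x ⬝ᵥ (Pxu * A) *ᵥ x = x ⬝ᵥ Pxu *ᵥ (A *ᵥ x) := by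
      rw [Matrix.mulVec_mulVec]
    have t2 : x ⬝ᵥ (Aᵀ * Pxuᵀ) *ᵥ x = x ⬝ᵥ Pxu *ᵥ (A *ᵥ x) := by
      rw [← Matrix.mulVec_mulVec, transpose_mulVec_dot A, transpose_mulVec_dot Pxu,
        dotProduct_comm]
    have t3 : x ⬝ᵥ (Aᵀ * Puu * A) *ᵥ x = (A *ᵥ x) ⬝ᵥ Puu *ᵥ (A *ᵥ x) := by
      rw [← Matrix.mulVec_mulVec, ← Matrix.mulVec_mulVec, transpose_mulVec_dot A]
    have s1 : (Pxu *ᵥ b) ⬝ᵥ x = x ⬝ᵥ Pxu *ᵥ b := dotProduct_comm _ _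
    have s2 : (Aᵀ *ᵥ (Puu *ᵥ b)) ⬝ᵥ x = b ⬝ᵥ Puu *ᵥ (A *ᵥ x) := by
      rw [mulVec_dot_s10, transpose_transpose, mulVec_dot_s10, hPuu']
    have s3 : (Aᵀ *ᵥ qu) ⬝ᵥ x = qu ⬝ᵥ (A *ᵥ x) := by
      rw [mulVec_dot_s10, transpose_transpose]
    have e : (A *ᵥ x) ⬝ᵥ Puu *ᵥ b = b ⬝ᵥ Puu *ᵥ (A *ᵥ x) := by
      rw [dot_mulVec_symm Puu hPuu', dotProduct_comm]
    simp only [quadPart, quadPart2, Matrix.add_mulVec, Matrix.mulVec_add,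
      dotProduct_add, add_dotProduct]
    rw [t1, t2, t3, s1, s2, s3, e]
    ring
  -- feasibility bookkeeping
  have hconstr : ∀ x : Fin n → ℝ, ((1 - Fu * Fud) * Fx) *ᵥ x + (1 - Fu * Fud) *ᵥ g
      = (Fx *ᵥ x + g) - (Fu * Fud) *ᵥ (Fx *ᵥ x + g) := by
    intro x
    rw [← Matrix.mulVec_mulVec, Matrix.sub_mulVec, Matrix.sub_mulVec,
      Matrix.one_mulVec, Matrix.one_mulVec, Matrix.mulVec_add]
    abel
  have hfeas_ustar : ∀ x : Fin n → ℝ,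
      ((1 - Fu * Fud) * Fx) *ᵥ x + (1 - Fu * Fud) *ᵥ g = 0 →
      Fx *ᵥ x + Fu *ᵥ (A *ᵥ x + b) + g = 0 := by
    intro x hx
    rw [hconstr] at hx
    have hfix : (Fu * Fud) *ᵥ (Fx *ᵥ x + g) = Fx *ᵥ x + g := (sub_eq_zero.mp hx).symm
    rw [hFuAb x, hfix]
    abel
  have hinfeasible : ∀ (x : Fin n → ℝ) (u : Fin m → ℝ), Fx *ᵥ x + Fu *ᵥ u + g = 0 →
      ((1 - Fu * Fud) * Fx) *ᵥ x + (1 - Fu * Fud) *ᵥ g = 0 := by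
    intro x u hu
    rw [hconstr]
    have hsum : (Fx *ᵥ x + g) + Fu *ᵥ u = 0 := by rw [← hu]; abel
    have hFxg : Fx *ᵥ x + g = -(Fu *ᵥ u) := eq_neg_of_add_eq_zero_left hsum
    have hfix : (Fu * Fud) *ᵥ (Fu *ᵥ u) = Fu *ᵥ u := by
      rw [Matrix.mulVec_mulVec, h1]
    rw [hFxg, Matrix.mulVec_neg, hfix]
    abel
  -- the infimum is attained at the affine minimizer on the domain
  have key : ∀ x : Fin n → ℝ,
      ((1 - Fu * Fud) * Fx) *ᵥ x + (1 - Fu * Fud) *ᵥ g = 0 →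
      (⨅ u, extQuad2 Pxx Pxu Puu qx qu r Fx Fu g x u) =
        extQuad2 Pxx Pxu Puu qx qu r Fx Fu g x (A *ᵥ x + b) := by
    intro x hx
    have hust := hfeas_ustar x hx
    refine le_antisymm (iInf_le _ _) (le_iInf fun u => ?_)
    by_cases hu : Fx *ᵥ x + Fu *ᵥ u + g = 0
    · simp only [extQuad2, if_pos hu, if_pos hust]
      exact EReal.coe_le_coe_iff.mpr (hopt x u hu hust)
    · simp only [extQuad2, if_neg hu]
      exact le_top
  refine ⟨Pxx + Pxu*A + Aᵀ*Pxuᵀ + Aᵀ*Puu*A,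
    Pxu *ᵥ b + Aᵀ *ᵥ (Puu *ᵥ b) + qx + Aᵀ *ᵥ qu,
    b ⬝ᵥ Puu *ᵥ b + 2*(qu ⬝ᵥ b) + r, A, b, ?_, ?_, ?_⟩
  · -- symmetry
    have hPxx' : Pxxᵀ = Pxx := hPxx
    show (Pxx + Pxu*A + Aᵀ*Pxuᵀ + Aᵀ*Puu*A)ᵀ = _
    simp only [Matrix.transpose_add, Matrix.transpose_mul, Matrix.transpose_transpose,
      hPxx', hPuu', ← Matrix.mul_assoc]
    abel
  · -- value of the partial minimization
    intro x
    by_cases hx : ((1 - Fu * Fud) * Fx) *ᵥ x + (1 - Fu * Fud) *ᵥ g = 0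
    · rw [key x hx]
      simp only [extQuad2, extQuad, if_pos (hfeas_ustar x hx), if_pos hx, hquadeq x]
    · have htop : ∀ u, extQuad2 Pxx Pxu Puu qx qu r Fx Fu g x u = ⊤ := by
        intro u
        simp only [extQuad2]
        rw [if_neg]
        intro hu
        exact hx (hinfeasible x u hu)
      rw [iInf_eq_top.mpr htop]
      simp only [extQuad, if_neg hx]
  · -- attainment
    intro x hx
    exact (key x hx).symm
end

section
/- For deterministic quantities the Bellman operator preserves extended quadraticity: if V: R^n → R ∪ {+∞} is a convex extended quadratic function, the dynamics are affine f(x,u) = Ax + Bu + c, and the stage cost g(x,u) is a convex extended quadratic in (x,u) that is strictly convex in u, then Q(x,u) = g(x,u) + V(Ax + Bu + c) is a convex extended quadratic in (x,u), and (provided inf_u Q(x,u) > −∞ for all x in the domain) the function x ↦ inf_u Q(x,u) is a convex extended quadratic function of x. -/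
/-! Extended quadratics are closed under sums (add the quadratic parts, stack the constraints)
and under affine substitution, so `Q(x,u) = g(x,u) + V(Ax + Bu + c)` is one; it is jointly convex
as a sum of convex functions. Convexity of `V` makes its quadratic form nonnegative on the null
space of its constraints, so `Q` inherits from `g` a `u`-block that is positive definite on the null
space of the `u`-constraints. The constrained minimization in `u` then has a stationary point
`u*(x) = L x + d` depending affinely on `x`, which minimizes by completing the square. Hence
`inf_u Q(x,u) = Q(x, L x + d)` is again an extended quadratic, whose domain
`{x | Fx x + Fu (L x + d) + g = 0}` is exactly the set of `x` admitting a feasible `u`, and it is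
convex because the infimum is attained. -/

open Matrix

/-- Joint convexity of a two-argument extended-real-valued function. -/
def ERealConvexOnPair {n m : ℕ} (f : (Fin n → ℝ) → (Fin m → ℝ) → EReal) : Prop :=
  ∀ x u y v, ∀ a b : ℝ, 0 ≤ a → 0 ≤ b → a + b = 1 →
    f (a • x + b • y) (a • u + b • v) ≤ (a : EReal) * f x u + (b : EReal) * f y v

/-- `f : Rⁿ → R ∪ {+∞}` is an extended quadratic function. -/
def IsExtQuadFun {n : ℕ} (f : (Fin n → ℝ) → EReal) : Prop :=
  ∃ (p : ℕ) (P : Matrix (Fin n) (Fin n) ℝ) (q : Fin n → ℝ) (r : ℝ)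
    (F : Matrix (Fin p) (Fin n) ℝ) (g : Fin p → ℝ),
    P.IsSymm ∧ ∀ x, f x = extQuad P q r F g x

/-- `f(x,u)` is an extended quadratic function of `(x,u)`. -/
def IsExtQuadPair {n m : ℕ} (f : (Fin n → ℝ) → (Fin m → ℝ) → EReal) : Prop :=
  ∃ (p : ℕ) (Pxx : Matrix (Fin n) (Fin n) ℝ) (Pxu : Matrix (Fin n) (Fin m) ℝ)
    (Puu : Matrix (Fin m) (Fin m) ℝ) (qx : Fin n → ℝ) (qu : Fin m → ℝ) (r : ℝ)
    (Fx : Matrix (Fin p) (Fin n) ℝ) (Fu : Matrix (Fin p) (Fin m) ℝ) (g : Fin p → ℝ),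
    Pxx.IsSymm ∧ Puu.IsSymm ∧ ∀ x u, f x u = extQuad2 Pxx Pxu Puu qx qu r Fx Fu g x u

lemma Fin.append_add_append {α : Type*} [Add α] {p₁ p₂ : ℕ} (a c : Fin p₁ → α) (b d : Fin p₂ → α) :
    Fin.append a b + Fin.append c d = Fin.append (a + c) (b + d) := by
  ext i; cases i using Fin.addCases <;> simp

lemma Fin.append_eq_zero_iff {α : Type*} [Zero α] {p₁ p₂ : ℕ} (a : Fin p₁ → α) (b : Fin p₂ → α) :
    Fin.append a b = 0 ↔ a = 0 ∧ b = 0 := by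
  simp [funext_iff, Fin.forall_fin_add]

def stackRows {α ι : Type*} {p₁ p₂ : ℕ} (M₁ : Matrix (Fin p₁) ι α) (M₂ : Matrix (Fin p₂) ι α) :
    Matrix (Fin (p₁ + p₂)) ι α :=
  Matrix.of (Fin.append M₁ M₂)

lemma stackRows_mulVec {α ι : Type*} [NonUnitalNonAssocSemiring α] [Fintype ι] {p₁ p₂ : ℕ}
    (M₁ : Matrix (Fin p₁) ι α) (M₂ : Matrix (Fin p₂) ι α) (v : ι → α) :
    stackRows M₁ M₂ *ᵥ v = Fin.append (M₁ *ᵥ v) (M₂ *ᵥ v) := by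
  ext i
  cases i using Fin.addCases
  · exact congrArg (· ⬝ᵥ v) (Fin.append_left M₁ M₂ _) |>.trans
      (Fin.append_left (M₁ *ᵥ v) (M₂ *ᵥ v) _).symm
  · exact congrArg (· ⬝ᵥ v) (Fin.append_right M₁ M₂ _) |>.trans
      (Fin.append_right (M₁ *ᵥ v) (M₂ *ᵥ v) _).symm

section MatrixLemmas

variable {R ι κ : Type*} [CommSemiring R] [Fintype ι]

lemma Matrix.transpose_mulVec_dotProduct [Fintype κ] (A : Matrix ι κ R) (y : ι → R) (x : κ → R) :
    (Aᵀ *ᵥ y) ⬝ᵥ x = y ⬝ᵥ A *ᵥ x := by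
  rw [dotProduct_comm, dotProduct_transpose_mulVec]

lemma Matrix.IsSymm.dotProduct_mulVec_comm {P : Matrix ι ι R} (hP : P.IsSymm) (y z : ι → R) :
    y ⬝ᵥ P *ᵥ z = z ⬝ᵥ P *ᵥ y := by
  simpa [hP.eq] using dotProduct_transpose_mulVec P y z

lemma Matrix.IsSymm.mulVec_dotProduct {P : Matrix ι ι R} (hP : P.IsSymm) (y z : ι → R) :
    (P *ᵥ y) ⬝ᵥ z = y ⬝ᵥ P *ᵥ z := by
  rw [dotProduct_comm, hP.dotProduct_mulVec_comm]

lemma Matrix.IsSymm.transpose_mul_mul {P : Matrix ι ι R} (hP : P.IsSymm) (A : Matrix ι κ R) :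
    (Aᵀ * P * A).IsSymm := by
  simp [Matrix.IsSymm, transpose_mul, hP.eq, Matrix.mul_assoc]

end MatrixLemmas

lemma Matrix.exists_innerInverse {K : Type*} [Field K] {p m : ℕ} (F : Matrix (Fin p) (Fin m) K) :
    ∃ G : Matrix (Fin m) (Fin p) K, ∀ u, F *ᵥ (G *ᵥ (F *ᵥ u)) = F *ᵥ u := by
  obtain ⟨π, hπ⟩ := LinearMap.exists_leftInverse_of_injective
    (LinearMap.range F.mulVecLin).subtype (Submodule.ker_subtype _)
  obtain ⟨σ, hσ⟩ := LinearMap.exists_rightInverse_of_surjective F.mulVecLin.rangeRestrict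
    (LinearMap.range_rangeRestrict _)
  refine ⟨LinearMap.toMatrix' (σ ∘ₗ π), fun u => ?_⟩
  have hπu : π (F *ᵥ u) = F.mulVecLin.rangeRestrict u :=
    LinearMap.congr_fun hπ (F.mulVecLin.rangeRestrict u)
  have hσu := congrArg Subtype.val (LinearMap.congr_fun hσ (F.mulVecLin.rangeRestrict u))
  rw [LinearMap.toMatrix'_mulVec, LinearMap.comp_apply, hπu]
  exact hσu

lemma ERealConvexOnPair.add {n m : ℕ} {f g : (Fin n → ℝ) → (Fin m → ℝ) → EReal}
    (hf : ERealConvexOnPair f) (hg : ERealConvexOnPair g) :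
    ERealConvexOnPair (fun x u => f x u + g x u) := by
  intro x u y v a b ha hb hab
  have distrib (t : ℝ) (ht : 0 ≤ t) (p q : EReal) : (t : EReal) * (p + q) = t * p + t * q :=
    EReal.left_distrib_of_nonneg_of_ne_top (EReal.coe_nonneg.mpr ht) (EReal.coe_ne_top t) p q
  calc f (a • x + b • y) (a • u + b • v) + g (a • x + b • y) (a • u + b • v)
      ≤ (a * f x u + b * f y v) + (a * g x u + b * g y v) :=
        add_le_add (hf x u y v a b ha hb hab) (hg x u y v a b ha hb hab)
    _ = a * (f x u + g x u) + b * (f y v + g y v) := by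
        rw [distrib a ha, distrib b hb, add_add_add_comm]

lemma ERealConvexOn.comp_affine {n k m : ℕ} {V : (Fin k → ℝ) → EReal} (hV : ERealConvexOn V)
    (A : Matrix (Fin k) (Fin n) ℝ) (B : Matrix (Fin k) (Fin m) ℝ) (c : Fin k → ℝ) :
    ERealConvexOnPair (fun x u => V (A *ᵥ x + B *ᵥ u + c)) := by
  intro x u y v a b ha hb hab
  have hc : c = a • c + b • c := by rw [← add_smul, hab, one_smul]
  convert hV (A *ᵥ x + B *ᵥ u + c) (A *ᵥ y + B *ᵥ v + c) a b ha hb hab using 2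
  simp only [mulVec_add, mulVec_smul, smul_add]
  nth_rw 1 [hc]; abel

lemma ERealConvexOnPair.iInf {n m : ℕ} {f : (Fin n → ℝ) → (Fin m → ℝ) → EReal}
    (hf : ERealConvexOnPair f) (hmin : ∀ x, ∃ u, ∀ v, f x u ≤ f x v) :
    ERealConvexOn (fun x => ⨅ u, f x u) := by
  intro x y a b ha hb hab
  obtain ⟨ux, hux⟩ := hmin x
  obtain ⟨uy, huy⟩ := hmin y
  dsimp only
  rw [(iInf_le _ ux).antisymm (le_iInf hux), (iInf_le _ uy).antisymm (le_iInf huy)]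
  exact (iInf_le _ _).trans (hf x ux y uy a b ha hb hab)

lemma quadPart_add_add_quadPart_sub {k : ℕ} (P : Matrix (Fin k) (Fin k) ℝ) (q : Fin k → ℝ) (r : ℝ)
    (z w : Fin k → ℝ) :
    quadPart P q r (z + w) + quadPart P q r (z - w) = 2 * quadPart P q r z + w ⬝ᵥ P *ᵥ w := by
  unfold quadPart
  simp only [mulVec_add, mulVec_sub, dotProduct_add, dotProduct_sub, add_dotProduct,
    sub_dotProduct]
  ring

lemma ERealConvexOn.extQuad_dotProduct_mulVec_nonneg {k p : ℕ} {P : Matrix (Fin k) (Fin k) ℝ}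
    {q : Fin k → ℝ} {r : ℝ} {F : Matrix (Fin p) (Fin k) ℝ} {g : Fin p → ℝ}
    (hV : ERealConvexOn (extQuad P q r F g)) {z w : Fin k → ℝ} (hz : F *ᵥ z + g = 0)
    (hw : F *ᵥ w = 0) : 0 ≤ w ⬝ᵥ P *ᵥ w := by
  have h := hV (z + w) (z - w) (1 / 2) (1 / 2) (by norm_num) (by norm_num) (by norm_num)
  have hmid : (1 / 2 : ℝ) • (z + w) + (1 / 2 : ℝ) • (z - w) = z := by module
  have hplus : F *ᵥ (z + w) + g = 0 := by rwa [mulVec_add, hw, add_zero]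
  have hminus : F *ᵥ (z - w) + g = 0 := by rwa [mulVec_sub, hw, sub_zero]
  rw [hmid, extQuad, extQuad, extQuad, if_pos hz, if_pos hplus, if_pos hminus, ← EReal.coe_mul,
    ← EReal.coe_mul, ← EReal.coe_add, EReal.coe_le_coe_iff] at h
  linarith [quadPart_add_add_quadPart_sub P q r z w]

section Closure

variable {n m : ℕ}

lemma quadPart_comp_affine {k : ℕ} {P : Matrix (Fin k) (Fin k) ℝ} (hP : P.IsSymm) (q : Fin k → ℝ)
    (r : ℝ) (A : Matrix (Fin k) (Fin n) ℝ) (B : Matrix (Fin k) (Fin m) ℝ) (c : Fin k → ℝ)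
    (x : Fin n → ℝ) (u : Fin m → ℝ) :
    quadPart P q r (A *ᵥ x + B *ᵥ u + c) =
      quadPart2 (Aᵀ * P * A) (Aᵀ * P * B) (Bᵀ * P * B) (Aᵀ *ᵥ (P *ᵥ c + q))
        (Bᵀ *ᵥ (P *ᵥ c + q)) (c ⬝ᵥ P *ᵥ c + 2 * (q ⬝ᵥ c) + r) x u := by
  unfold quadPart quadPart2
  simp only [mulVec_add, ← mulVec_mulVec, dotProduct_add, add_dotProduct,
    dotProduct_transpose_mulVec, transpose_mulVec_dotProduct, hP.mulVec_dotProduct]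
  rw [hP.dotProduct_mulVec_comm (A *ᵥ x) (B *ᵥ u), hP.dotProduct_mulVec_comm (A *ᵥ x) c,
    hP.dotProduct_mulVec_comm (B *ᵥ u) c]
  ring

lemma mulVec_comp_affine_add {k p : ℕ} (F : Matrix (Fin p) (Fin k) ℝ) (g : Fin p → ℝ)
    (A : Matrix (Fin k) (Fin n) ℝ) (B : Matrix (Fin k) (Fin m) ℝ) (c : Fin k → ℝ)
    (x : Fin n → ℝ) (u : Fin m → ℝ) :
    (F * A) *ᵥ x + (F * B) *ᵥ u + (F *ᵥ c + g) = F *ᵥ (A *ᵥ x + B *ᵥ u + c) + g := by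
  simp only [mulVec_add, mulVec_mulVec]; abel

lemma extQuad_comp_affine {k p : ℕ} {P : Matrix (Fin k) (Fin k) ℝ} (hP : P.IsSymm)
    (q : Fin k → ℝ) (r : ℝ) (F : Matrix (Fin p) (Fin k) ℝ) (g : Fin p → ℝ)
    (A : Matrix (Fin k) (Fin n) ℝ) (B : Matrix (Fin k) (Fin m) ℝ) (c : Fin k → ℝ)
    (x : Fin n → ℝ) (u : Fin m → ℝ) :
    extQuad P q r F g (A *ᵥ x + B *ᵥ u + c) =
      extQuad2 (Aᵀ * P * A) (Aᵀ * P * B) (Bᵀ * P * B) (Aᵀ *ᵥ (P *ᵥ c + q))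
        (Bᵀ *ᵥ (P *ᵥ c + q)) (c ⬝ᵥ P *ᵥ c + 2 * (q ⬝ᵥ c) + r) (F * A) (F * B) (F *ᵥ c + g)
        x u := by
  rw [extQuad, extQuad2, mulVec_comp_affine_add, quadPart_comp_affine hP]

lemma quadPart2_add (Pxx Pxx' : Matrix (Fin n) (Fin n) ℝ) (Pxu Pxu' : Matrix (Fin n) (Fin m) ℝ)
    (Puu Puu' : Matrix (Fin m) (Fin m) ℝ) (qx qx' : Fin n → ℝ) (qu qu' : Fin m → ℝ) (r r' : ℝ)
    (x : Fin n → ℝ) (u : Fin m → ℝ) :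
    quadPart2 Pxx Pxu Puu qx qu r x u + quadPart2 Pxx' Pxu' Puu' qx' qu' r' x u =
      quadPart2 (Pxx + Pxx') (Pxu + Pxu') (Puu + Puu') (qx + qx') (qu + qu') (r + r') x u := by
  unfold quadPart2
  simp only [add_mulVec, dotProduct_add, add_dotProduct]
  ring

lemma stackRows_feasible_iff {p p' : ℕ} (Fx : Matrix (Fin p) (Fin n) ℝ)
    (Fx' : Matrix (Fin p') (Fin n) ℝ) (Fu : Matrix (Fin p) (Fin m) ℝ)
    (Fu' : Matrix (Fin p') (Fin m) ℝ) (g : Fin p → ℝ) (g' : Fin p' → ℝ)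
    (x : Fin n → ℝ) (u : Fin m → ℝ) :
    stackRows Fx Fx' *ᵥ x + stackRows Fu Fu' *ᵥ u + Fin.append g g' = 0 ↔
      Fx *ᵥ x + Fu *ᵥ u + g = 0 ∧ Fx' *ᵥ x + Fu' *ᵥ u + g' = 0 := by
  rw [stackRows_mulVec, stackRows_mulVec, Fin.append_add_append, Fin.append_add_append,
    Fin.append_eq_zero_iff]

lemma extQuad2_add {p p' : ℕ} (Pxx Pxx' : Matrix (Fin n) (Fin n) ℝ)
    (Pxu Pxu' : Matrix (Fin n) (Fin m) ℝ) (Puu Puu' : Matrix (Fin m) (Fin m) ℝ)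
    (qx qx' : Fin n → ℝ) (qu qu' : Fin m → ℝ) (r r' : ℝ)
    (Fx : Matrix (Fin p) (Fin n) ℝ) (Fx' : Matrix (Fin p') (Fin n) ℝ)
    (Fu : Matrix (Fin p) (Fin m) ℝ) (Fu' : Matrix (Fin p') (Fin m) ℝ)
    (g : Fin p → ℝ) (g' : Fin p' → ℝ) (x : Fin n → ℝ) (u : Fin m → ℝ) :
    extQuad2 Pxx Pxu Puu qx qu r Fx Fu g x u + extQuad2 Pxx' Pxu' Puu' qx' qu' r' Fx' Fu' g' x u =
      extQuad2 (Pxx + Pxx') (Pxu + Pxu') (Puu + Puu') (qx + qx') (qu + qu') (r + r')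
        (stackRows Fx Fx') (stackRows Fu Fu') (Fin.append g g') x u := by
  simp only [extQuad2, stackRows_feasible_iff, ← quadPart2_add]
  split_ifs <;> simp_all [← EReal.coe_add]

lemma quadPart2_comp_affine_right {Pxx : Matrix (Fin n) (Fin n) ℝ} {Pxu : Matrix (Fin n) (Fin m) ℝ}
    {Puu : Matrix (Fin m) (Fin m) ℝ} (hPuu : Puu.IsSymm) (qx : Fin n → ℝ) (qu : Fin m → ℝ) (r : ℝ)
    (L : Matrix (Fin m) (Fin n) ℝ) (d : Fin m → ℝ) (x : Fin n → ℝ) :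
    quadPart2 Pxx Pxu Puu qx qu r x (L *ᵥ x + d) =
      quadPart (Pxx + Pxu * L + (Pxu * L)ᵀ + Lᵀ * Puu * L)
        (qx + Lᵀ *ᵥ qu + (Pxu + Lᵀ * Puu) *ᵥ d) (d ⬝ᵥ Puu *ᵥ d + 2 * (qu ⬝ᵥ d) + r) x := by
  unfold quadPart quadPart2
  simp only [add_mulVec, mulVec_add, ← mulVec_mulVec, dotProduct_add, add_dotProduct,
    dotProduct_transpose_mulVec, transpose_mulVec_dotProduct, hPuu.mulVec_dotProduct]
  rw [hPuu.dotProduct_mulVec_comm (L *ᵥ x) d, dotProduct_comm (Pxu *ᵥ d) x]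
  ring

lemma extQuad2_comp_affine_right {p : ℕ} {Pxx : Matrix (Fin n) (Fin n) ℝ}
    {Pxu : Matrix (Fin n) (Fin m) ℝ} {Puu : Matrix (Fin m) (Fin m) ℝ} (hPuu : Puu.IsSymm)
    (qx : Fin n → ℝ) (qu : Fin m → ℝ) (r : ℝ) (Fx : Matrix (Fin p) (Fin n) ℝ)
    (Fu : Matrix (Fin p) (Fin m) ℝ) (g : Fin p → ℝ)
    (L : Matrix (Fin m) (Fin n) ℝ) (d : Fin m → ℝ) (x : Fin n → ℝ) :
    extQuad2 Pxx Pxu Puu qx qu r Fx Fu g x (L *ᵥ x + d) =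
      extQuad (Pxx + Pxu * L + (Pxu * L)ᵀ + Lᵀ * Puu * L)
        (qx + Lᵀ *ᵥ qu + (Pxu + Lᵀ * Puu) *ᵥ d) (d ⬝ᵥ Puu *ᵥ d + 2 * (qu ⬝ᵥ d) + r)
        (Fx + Fu * L) (Fu *ᵥ d + g) x := by
  have hF : Fx *ᵥ x + Fu *ᵥ (L *ᵥ x + d) + g = (Fx + Fu * L) *ᵥ x + (Fu *ᵥ d + g) := by
    simp only [add_mulVec, mulVec_add, mulVec_mulVec]; abel
  rw [extQuad2, extQuad, hF, quadPart2_comp_affine_right hPuu]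

lemma isSymm_add_mul_add_transpose {Pxx : Matrix (Fin n) (Fin n) ℝ} (hPxx : Pxx.IsSymm)
    (Pxu : Matrix (Fin n) (Fin m) ℝ) {Puu : Matrix (Fin m) (Fin m) ℝ} (hPuu : Puu.IsSymm)
    (L : Matrix (Fin m) (Fin n) ℝ) : (Pxx + Pxu * L + (Pxu * L)ᵀ + Lᵀ * Puu * L).IsSymm := by
  have h := (hPxx.add (isSymm_add_transpose_self (Pxu * L))).add (hPuu.transpose_mul_mul L)
  rwa [← add_assoc] at h

end Closure

lemma exists_stationary_on_ker {p m : ℕ} (P : Matrix (Fin m) (Fin m) ℝ)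
    (F : Matrix (Fin p) (Fin m) ℝ) (hpos : ∀ v, F *ᵥ v = 0 → v ≠ 0 → 0 < v ⬝ᵥ P *ᵥ v) :
    ∃ S : Matrix (Fin m) (Fin m) ℝ, ∀ ℓ, F *ᵥ (S *ᵥ ℓ) = 0 ∧
      ∀ w, F *ᵥ w = 0 → w ⬝ᵥ (P *ᵥ (S *ᵥ ℓ) + ℓ) = 0 := by
  set K := LinearMap.ker F.mulVecLin
  -- positivity makes the form nondegenerate on `K`, so `K ≃ Dual K` and every `ℓ` has a solution
  let β := (Matrix.toBilin' Pᵀ).restrict K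
  have hβ (v w : K) : β v w = (w : Fin m → ℝ) ⬝ᵥ P *ᵥ v := by
    simp [β, Matrix.toBilin'_apply', dotProduct_transpose_mulVec]
  have hanis (v : K) (hv : β v v = 0) : v = 0 := by
    by_contra hv0
    have := hpos v v.2 (by simpa using hv0)
    linarith [hβ v v]
  have hnd : β.Nondegenerate := ⟨fun v hv => hanis v (hv v), fun v hv => hanis v (hv v)⟩
  let S : (Fin m → ℝ) →ₗ[ℝ] K :=
    (β.toDual hnd).symm ∘ₗ (-(K.subtype.dualMap ∘ₗ dotProductBilin ℝ ℝ))
  refine ⟨LinearMap.toMatrix' (K.subtype ∘ₗ S), fun ℓ => ⟨?_, fun w hw => ?_⟩⟩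
  · rw [LinearMap.toMatrix'_mulVec]
    exact (S ℓ).2
  have h := LinearMap.BilinForm.apply_toDual_symm_apply (hB := hnd)
    (-(K.subtype.dualMap (dotProductBilin ℝ ℝ ℓ))) ⟨w, hw⟩
  rw [hβ] at h
  simp only [LinearMap.neg_apply, LinearMap.dualMap_apply, Submodule.subtype_apply,
    dotProductBilin_apply_apply] at h
  rw [LinearMap.toMatrix'_mulVec, dotProduct_add, dotProduct_comm w ℓ]
  exact add_eq_zero_iff_eq_neg.mpr h

section PartialMinimization

variable {n m p : ℕ} {Pxx : Matrix (Fin n) (Fin n) ℝ} {Pxu : Matrix (Fin n) (Fin m) ℝ}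
  {Puu : Matrix (Fin m) (Fin m) ℝ}

lemma quadPart2_add_right (hPuu : Puu.IsSymm) (qx : Fin n → ℝ) (qu : Fin m → ℝ) (r : ℝ)
    (x : Fin n → ℝ) (u w : Fin m → ℝ) :
    quadPart2 Pxx Pxu Puu qx qu r x (u + w) = quadPart2 Pxx Pxu Puu qx qu r x u +
      w ⬝ᵥ (Pxuᵀ *ᵥ x + Puu *ᵥ u + qu) + w ⬝ᵥ Puu *ᵥ w / 2 := by
  unfold quadPart2
  simp only [mulVec_add, dotProduct_add, add_dotProduct, dotProduct_transpose_mulVec]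
  rw [hPuu.dotProduct_mulVec_comm u w, dotProduct_comm qu w]
  ring

lemma quadPart2_le_of_stationary (hPuu : Puu.IsSymm) (qx : Fin n → ℝ) (qu : Fin m → ℝ) (r : ℝ)
    (x : Fin n → ℝ) {u₀ u : Fin m → ℝ}
    (hstat : (u - u₀) ⬝ᵥ (Pxuᵀ *ᵥ x + Puu *ᵥ u₀ + qu) = 0)
    (hpsd : 0 ≤ (u - u₀) ⬝ᵥ Puu *ᵥ (u - u₀)) :
    quadPart2 Pxx Pxu Puu qx qu r x u₀ ≤ quadPart2 Pxx Pxu Puu qx qu r x u := by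
  have h := quadPart2_add_right (Pxx := Pxx) (Pxu := Pxu) hPuu qx qu r x u₀ (u - u₀)
  rw [add_sub_cancel, hstat] at h
  linarith

variable (Pxx Pxu) in
theorem exists_affine_argmin_extQuad2 (hPuu : Puu.IsSymm) (qx : Fin n → ℝ) (qu : Fin m → ℝ)
    (r : ℝ) (Fx : Matrix (Fin p) (Fin n) ℝ) (Fu : Matrix (Fin p) (Fin m) ℝ) (g : Fin p → ℝ)
    (hpos : (∃ x u, Fx *ᵥ x + Fu *ᵥ u + g = 0) →
      ∀ v, Fu *ᵥ v = 0 → v ≠ 0 → 0 < v ⬝ᵥ Puu *ᵥ v) :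
    ∃ (L : Matrix (Fin m) (Fin n) ℝ) (d : Fin m → ℝ), ∀ x u,
      extQuad2 Pxx Pxu Puu qx qu r Fx Fu g x (L *ᵥ x + d) ≤
        extQuad2 Pxx Pxu Puu qx qu r Fx Fu g x u := by
  by_cases hdom : ∃ x u, Fx *ᵥ x + Fu *ᵥ u + g = 0
  swap
  · push Not at hdom
    exact ⟨0, 0, fun x u => by simp [extQuad2, hdom]⟩
  obtain ⟨G, hG⟩ := Fu.exists_innerInverse
  obtain ⟨S, hS⟩ := exists_stationary_on_ker Puu Fu (hpos hdom)
  -- `u₀ = -G (Fx x + g)` below is feasible whenever some `u` is, and `S` moves it inside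
  -- `ker Fu` to the stationary point; both steps are affine in `x`.
  refine ⟨-(G * Fx) + S * (Pxuᵀ - Puu * G * Fx), -(G *ᵥ g) + S *ᵥ (qu - Puu *ᵥ (G *ᵥ g)),
    fun x u => ?_⟩
  unfold extQuad2
  by_cases hu : Fx *ᵥ x + Fu *ᵥ u + g = 0
  swap
  · rw [if_neg hu]
    exact le_top
  set u₀ := -(G *ᵥ (Fx *ᵥ x + g))
  set ℓ := Pxuᵀ *ᵥ x + Puu *ᵥ u₀ + qu
  have hLd : (-(G * Fx) + S * (Pxuᵀ - Puu * G * Fx)) *ᵥ x +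
      (-(G *ᵥ g) + S *ᵥ (qu - Puu *ᵥ (G *ᵥ g))) = u₀ + S *ᵥ ℓ := by
    simp only [u₀, ℓ, ← mulVec_mulVec, add_mulVec, sub_mulVec, neg_mulVec, mulVec_add,
      mulVec_sub, mulVec_neg]
    abel
  have hFu₀ : Fu *ᵥ u₀ = Fu *ᵥ u := by
    simp only [u₀]
    rw [show Fx *ᵥ x + g = -(Fu *ᵥ u) by linear_combination hu]
    simp only [mulVec_neg, neg_neg, hG]
  have hfeas : Fx *ᵥ x + Fu *ᵥ (u₀ + S *ᵥ ℓ) + g = 0 := by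
    rwa [mulVec_add, (hS ℓ).1, add_zero, hFu₀]
  have hker : Fu *ᵥ (u - (u₀ + S *ᵥ ℓ)) = 0 := by
    rw [mulVec_sub, mulVec_add, hFu₀, (hS ℓ).1, add_zero, sub_self]
  have hgrad : Pxuᵀ *ᵥ x + Puu *ᵥ (u₀ + S *ᵥ ℓ) + qu = Puu *ᵥ (S *ᵥ ℓ) + ℓ := by
    simp only [ℓ, mulVec_add]
    abel
  rw [hLd, if_pos hfeas, if_pos hu, EReal.coe_le_coe_iff]
  refine quadPart2_le_of_stationary hPuu qx qu r x ?_ ?_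
  · rw [hgrad]
    exact (hS ℓ).2 _ hker
  · by_cases hw : u - (u₀ + S *ᵥ ℓ) = 0
    · simp [hw]
    · exact (hpos hdom _ hker hw).le

theorem isExtQuadFun_and_convex_iInf_extQuad2 (hPxx : Pxx.IsSymm) (hPuu : Puu.IsSymm)
    {qx : Fin n → ℝ} {qu : Fin m → ℝ} {r : ℝ} {Fx : Matrix (Fin p) (Fin n) ℝ}
    {Fu : Matrix (Fin p) (Fin m) ℝ} {g : Fin p → ℝ}
    (hconv : ERealConvexOnPair (extQuad2 Pxx Pxu Puu qx qu r Fx Fu g))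
    (hpos : (∃ x u, Fx *ᵥ x + Fu *ᵥ u + g = 0) →
      ∀ v, Fu *ᵥ v = 0 → v ≠ 0 → 0 < v ⬝ᵥ Puu *ᵥ v) :
    IsExtQuadFun (fun x => ⨅ u, extQuad2 Pxx Pxu Puu qx qu r Fx Fu g x u) ∧
      ERealConvexOn (fun x => ⨅ u, extQuad2 Pxx Pxu Puu qx qu r Fx Fu g x u) := by
  obtain ⟨L, d, hmin⟩ := exists_affine_argmin_extQuad2 Pxx Pxu hPuu qx qu r Fx Fu g hpos
  have hval (x : Fin n → ℝ) : ⨅ u, extQuad2 Pxx Pxu Puu qx qu r Fx Fu g x u =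
      extQuad2 Pxx Pxu Puu qx qu r Fx Fu g x (L *ᵥ x + d) :=
    (iInf_le _ _).antisymm (le_iInf (hmin x))
  exact ⟨⟨_, _, _, _, _, _, isSymm_add_mul_add_transpose hPxx Pxu hPuu L,
    fun x => (hval x).trans (extQuad2_comp_affine_right hPuu qx qu r Fx Fu g L d x)⟩,
    hconv.iInf fun x => ⟨_, hmin x⟩⟩

end PartialMinimization

/-- the (deterministic) Bellman operator preserves extended quadraticity:
if `V` is a convex extended quadratic, the dynamics are affine `f(x,u) = Ax + Bu + c`,
and the stage cost is a convex extended quadratic in `(x,u)` that is strictly convex in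
`u`, then `Q(x,u) = g(x,u) + V(Ax + Bu + c)` is a convex extended quadratic in `(x,u)`;
and provided `inf_u Q(x,u) > −∞` for all `x`, the partial minimum `x ↦ inf_u Q(x,u)` is a
convex extended quadratic function of `x`. -/
theorem bellman_preserves_extQuad {n m pv pg : ℕ}
    (PV : Matrix (Fin n) (Fin n) ℝ) (hPV : PV.IsSymm) (qV : Fin n → ℝ) (rV : ℝ)
    (FV : Matrix (Fin pv) (Fin n) ℝ) (gV : Fin pv → ℝ)
    (hVconv : ERealConvexOn (extQuad PV qV rV FV gV))
    (A : Matrix (Fin n) (Fin n) ℝ) (B : Matrix (Fin n) (Fin m) ℝ) (c : Fin n → ℝ)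
    (Pxx : Matrix (Fin n) (Fin n) ℝ) (hPxx : Pxx.IsSymm)
    (Pxu : Matrix (Fin n) (Fin m) ℝ)
    (Puu : Matrix (Fin m) (Fin m) ℝ) (hPuu : Puu.IsSymm)
    (qx : Fin n → ℝ) (qu : Fin m → ℝ) (rg : ℝ)
    (Fx : Matrix (Fin pg) (Fin n) ℝ) (Fu : Matrix (Fin pg) (Fin m) ℝ) (gg : Fin pg → ℝ)
    (hgconv : ERealConvexOnPair (extQuad2 Pxx Pxu Puu qx qu rg Fx Fu gg))
    (hgstrict : ∀ v : Fin m → ℝ, Fu.mulVec v = 0 → v ≠ 0 → 0 < v ⬝ᵥ Puu.mulVec v) :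
    (IsExtQuadPair (fun x u => extQuad2 Pxx Pxu Puu qx qu rg Fx Fu gg x u +
        extQuad PV qV rV FV gV (A.mulVec x + B.mulVec u + c)) ∧
      ERealConvexOnPair (fun x u => extQuad2 Pxx Pxu Puu qx qu rg Fx Fu gg x u +
        extQuad PV qV rV FV gV (A.mulVec x + B.mulVec u + c))) ∧
    ((∀ x, (⨅ u, extQuad2 Pxx Pxu Puu qx qu rg Fx Fu gg x u +
          extQuad PV qV rV FV gV (A.mulVec x + B.mulVec u + c)) ≠ ⊥) →
      IsExtQuadFun (fun x => ⨅ u, extQuad2 Pxx Pxu Puu qx qu rg Fx Fu gg x u +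
          extQuad PV qV rV FV gV (A.mulVec x + B.mulVec u + c)) ∧
      ERealConvexOn (fun x => ⨅ u, extQuad2 Pxx Pxu Puu qx qu rg Fx Fu gg x u +
          extQuad PV qV rV FV gV (A.mulVec x + B.mulVec u + c))) := by
  have hQ (x u) : extQuad2 Pxx Pxu Puu qx qu rg Fx Fu gg x u +
      extQuad PV qV rV FV gV (A *ᵥ x + B *ᵥ u + c) =
      extQuad2 (Pxx + Aᵀ * PV * A) (Pxu + Aᵀ * PV * B) (Puu + Bᵀ * PV * B)
        (qx + Aᵀ *ᵥ (PV *ᵥ c + qV)) (qu + Bᵀ *ᵥ (PV *ᵥ c + qV))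
        (rg + (c ⬝ᵥ PV *ᵥ c + 2 * (qV ⬝ᵥ c) + rV)) (stackRows Fx (FV * A))
        (stackRows Fu (FV * B)) (Fin.append gg (FV *ᵥ c + gV)) x u := by
    rw [extQuad_comp_affine hPV, extQuad2_add]
  have hQconv := hgconv.add (hVconv.comp_affine A B c)
  simp only [hQ] at hQconv ⊢
  have hPxx' := hPxx.add (hPV.transpose_mul_mul A)
  have hPuu' := hPuu.add (hPV.transpose_mul_mul B)
  have hstrict : (∃ x u, stackRows Fx (FV * A) *ᵥ x + stackRows Fu (FV * B) *ᵥ u +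
      Fin.append gg (FV *ᵥ c + gV) = 0) →
      ∀ v, stackRows Fu (FV * B) *ᵥ v = 0 → v ≠ 0 → 0 < v ⬝ᵥ (Puu + Bᵀ * PV * B) *ᵥ v := by
    rintro ⟨x, u, hxu⟩ v hv hv0
    rw [stackRows_feasible_iff, mulVec_comp_affine_add] at hxu
    rw [stackRows_mulVec, Fin.append_eq_zero_iff, ← mulVec_mulVec] at hv
    rw [add_mulVec, dotProduct_add, ← mulVec_mulVec, ← mulVec_mulVec, dotProduct_transpose_mulVec,
      hPV.mulVec_dotProduct]
    exact add_pos_of_pos_of_nonneg (hgstrict v hv.1 hv0)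
      (hVconv.extQuad_dotProduct_mulVec_nonneg hxu.2 hv.2)
  exact ⟨⟨⟨_, _, _, _, _, _, _, _, _, _, hPxx', hPuu', fun _ _ => rfl⟩, hQconv⟩,
    fun _ => isExtQuadFun_and_convex_iInf_extQuad2 hPxx' hPuu' hQconv hstrict⟩
end
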